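/- (Proposition 5.1, CVaR case) Let α ∈ (0,1) and γ_α(u) := (1/(1−α)) · 1_{(α,1)}(u). Then ∫ γ_α = 1 and σ₀² := ∫ γ_α² − 1 = α/(1−α). Assume ρ := (∫ γ_α q_F − μ_F)/(σ₀ σ_F) < 1, let ε ∈ (ε_min, ε_max) with ε_max := ε_min + 2σσ_F(1−ρ), and define δ* := −ρ·sqrt(α/(1−α))/(2σ_F) + (ε_min + 2σσ_F − ε)·sqrt(α(1−ρ²)/(1−α))/(2σ_F·sqrt((ε_min + 4σσ_F − ε)(ε − ε_min))). Then for every δ ≥ δ*, sup_{q ∈ M_ε(μ,σ)} [ ∫ γ_α q − δ · d²(q_F, q) ] = μ + σ·sqrt(α/(1−α) + 4δ²σ_F² + 4δσ_Fρ·sqrt(α/(1−α))) − δ(ε_min + 2σσ_F). -/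

import Mathlib

open MeasureTheory Set Filter

noncomputable section

def intI (f : ℝ → ℝ) : ℝ := ∫ u in Ioo (0:ℝ) 1, f u

abbrev I01 : Set ℝ := Ioo (0:ℝ) 1

lemma nu_prob : IsProbabilityMeasure ((volume : Measure ℝ).restrict I01) := by
  constructor
  rw [Measure.restrict_apply_univ, Real.volume_Ioo]
  norm_num

lemma intI_const (c : ℝ) : intI (fun _ => c) = c := by
  have := nu_prob
  simp [intI]

lemma intI_indicator (α c : ℝ) (h0 : 0 ≤ α) (h1 : α < 1) :
    intI (fun u => (Ioo α 1).indicator (fun _ => c) u) = c * (1 - α) := by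
  unfold intI
  rw [setIntegral_indicator measurableSet_Ioo]
  have : Ioo (0:ℝ) 1 ∩ Ioo α 1 = Ioo α 1 := by
    apply inter_eq_self_of_subset_right
    exact fun x hx => ⟨lt_of_le_of_lt h0 hx.1, hx.2⟩
  rw [this, setIntegral_const, Real.volume_real_Ioo_of_le (by linarith), smul_eq_mul,
    mul_comm]


lemma int_mul_of_sq (f g : ℝ → ℝ) (hf : IntegrableOn f I01 volume)
    (hf2 : IntegrableOn (fun u => f u ^ 2) I01 volume)
    (hg : IntegrableOn g I01 volume)
    (hg2 : IntegrableOn (fun u => g u ^ 2) I01 volume) :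
    IntegrableOn (fun u => f u * g u) I01 volume := by
  have hb : IntegrableOn (fun u => f u ^ 2 + g u ^ 2) I01 volume := hf2.add hg2
  have hm : AEStronglyMeasurable (fun u => f u * g u)
      ((volume : Measure ℝ).restrict I01) :=
    hf.aestronglyMeasurable.mul hg.aestronglyMeasurable
  apply Integrable.mono' hb hm
  filter_upwards with u
  have h1 : ‖f u * g u‖ = |f u| * |g u| := by rw [norm_mul]; rfl
  rw [h1]
  nlinarith [sq_nonneg (|f u| - |g u|), sq_abs (f u), sq_abs (g u), abs_nonneg (f u),
    abs_nonneg (g u)]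

lemma cauchy_schwarz (f g : ℝ → ℝ)
    (hf2 : IntegrableOn (fun u => f u ^ 2) I01 volume)
    (hg2 : IntegrableOn (fun u => g u ^ 2) I01 volume)
    (hfg : IntegrableOn (fun u => f u * g u) I01 volume)
    (a b : ℝ) (ha : 0 < a) (hb : 0 < b)
    (hfa : intI (fun u => f u ^ 2) = a ^ 2) (hgb : intI (fun u => g u ^ 2) = b ^ 2) :
    intI (fun u => f u * g u) ≤ a * b := by
  have key : 0 ≤ intI (fun u => (b * f u - a * g u) ^ 2) :=
    integral_nonneg fun u => sq_nonneg _
  have e : ∀ u, (b * f u - a * g u) ^ 2 =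
      b ^ 2 * f u ^ 2 + a ^ 2 * g u ^ 2 - 2 * a * b * (f u * g u) := by intro u; ring
  have i1 : IntegrableOn (fun u => b ^ 2 * f u ^ 2) I01 volume := hf2.const_mul _
  have i2 : IntegrableOn (fun u => a ^ 2 * g u ^ 2) I01 volume := hg2.const_mul _
  have i12 : IntegrableOn (fun u => b ^ 2 * f u ^ 2 + a ^ 2 * g u ^ 2) I01 volume := i1.add i2
  have i3 : IntegrableOn (fun u => 2 * a * b * (f u * g u)) I01 volume := hfg.const_mul _
  have expand : intI (fun u => (b * f u - a * g u) ^ 2) =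
      b ^ 2 * a ^ 2 + a ^ 2 * b ^ 2 - 2 * a * b * intI (fun u => f u * g u) := by
    unfold intI
    simp_rw [e]
    rw [integral_sub i12 i3, integral_add i1 i2, integral_const_mul,
      integral_const_mul, integral_const_mul]
    unfold intI at hfa hgb
    rw [hfa, hgb]
  rw [expand] at key
  nlinarith [mul_pos ha hb]

lemma chebyshev (f g : ℝ → ℝ) (hfm : MonotoneOn f I01) (hgm : MonotoneOn g I01)
    (hf : IntegrableOn f I01 volume) (hg : IntegrableOn g I01 volume)
    (hfg : IntegrableOn (fun u => f u * g u) I01 volume) :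
    intI f * intI g ≤ intI (fun u => f u * g u) := by
  haveI := nu_prob
  set ν := (volume : Measure ℝ).restrict I01 with hν
  have i1 : Integrable (fun p : ℝ × ℝ => (fun u => f u * g u) p.1 * (fun _ => (1:ℝ)) p.2)
      (ν.prod ν) := hfg.mul_prod (integrable_const 1)
  have i2 : Integrable (fun p : ℝ × ℝ => (fun _ => (1:ℝ)) p.1 * (fun u => f u * g u) p.2)
      (ν.prod ν) := (integrable_const (1:ℝ)).mul_prod hfg
  have i3 : Integrable (fun p : ℝ × ℝ => f p.1 * g p.2) (ν.prod ν) := hf.mul_prod hg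
  have i4 : Integrable (fun p : ℝ × ℝ => g p.1 * f p.2) (ν.prod ν) := hg.mul_prod hf
  have i12 : Integrable (fun p : ℝ × ℝ => (fun u => f u * g u) p.1 * (fun _ => (1:ℝ)) p.2 +
      (fun _ => (1:ℝ)) p.1 * (fun u => f u * g u) p.2) (ν.prod ν) := i1.add i2
  have i34 : Integrable (fun p : ℝ × ℝ => f p.1 * g p.2 + g p.1 * f p.2) (ν.prod ν) := i3.add i4
  have key : 0 ≤ ∫ p : ℝ × ℝ, (f p.1 - f p.2) * (g p.1 - g p.2) ∂(ν.prod ν) := by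
    apply integral_nonneg_of_ae
    have hprod : ν.prod ν = ((volume : Measure ℝ).prod volume).restrict (I01 ×ˢ I01) :=
      Measure.prod_restrict I01 I01
    have hae : ∀ᵐ p ∂(ν.prod ν), p ∈ I01 ×ˢ I01 := by
      rw [hprod]
      exact ae_restrict_mem (measurableSet_Ioo.prod measurableSet_Ioo)
    filter_upwards [hae] with p hp
    show (0:ℝ) ≤ (f p.1 - f p.2) * (g p.1 - g p.2)
    rcases le_total p.1 p.2 with h | h
    · nlinarith [hfm hp.1 hp.2 h, hgm hp.1 hp.2 h]
    · nlinarith [hfm hp.2 hp.1 h, hgm hp.2 hp.1 h]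
  have ec : ∫ p : ℝ × ℝ, (f p.1 - f p.2) * (g p.1 - g p.2) ∂(ν.prod ν) =
      ∫ p : ℝ × ℝ, ((fun u => f u * g u) p.1 * (fun _ => (1:ℝ)) p.2 +
        (fun _ => (1:ℝ)) p.1 * (fun u => f u * g u) p.2) -
        (f p.1 * g p.2 + g p.1 * f p.2) ∂(ν.prod ν) := by
    apply integral_congr_ae
    filter_upwards with p
    show (f p.1 - f p.2) * (g p.1 - g p.2) = f p.1 * g p.1 * 1 + 1 * (f p.2 * g p.2) -
      (f p.1 * g p.2 + g p.1 * f p.2)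
    ring
  have p1 : ∫ p : ℝ × ℝ, (fun u => f u * g u) p.1 * (fun _ => (1:ℝ)) p.2 ∂(ν.prod ν) =
      (∫ u, f u * g u ∂ν) * ∫ _ : ℝ, (1:ℝ) ∂ν :=
    integral_prod_mul (fun u => f u * g u) (fun _ => (1:ℝ))
  have p2 : ∫ p : ℝ × ℝ, (fun _ => (1:ℝ)) p.1 * (fun u => f u * g u) p.2 ∂(ν.prod ν) =
      (∫ _ : ℝ, (1:ℝ) ∂ν) * ∫ u, f u * g u ∂ν :=
    integral_prod_mul (fun _ => (1:ℝ)) (fun u => f u * g u)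
  have p3 : ∫ p : ℝ × ℝ, f p.1 * g p.2 ∂(ν.prod ν) = (∫ u, f u ∂ν) * ∫ u, g u ∂ν :=
    integral_prod_mul f g
  have p4 : ∫ p : ℝ × ℝ, g p.1 * f p.2 ∂(ν.prod ν) = (∫ u, g u ∂ν) * ∫ u, f u ∂ν :=
    integral_prod_mul g f
  rw [ec, integral_sub i12 i34, integral_add i1 i2, integral_add i3 i4,
    p1, p2, p3, p4] at key
  have h1 : ∫ _ : ℝ, (1:ℝ) ∂ν = 1 := by simp
  rw [h1] at key
  have hfi : ∫ u, f u ∂ν = intI f := rfl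
  have hgi : ∫ u, g u ∂ν = intI g := rfl
  have hfgi : ∫ u, f u * g u ∂ν = intI (fun u => f u * g u) := rfl
  rw [hfi, hgi, hfgi] at key
  linarith

lemma intI_comb5 (g1 g2 g3 g4 g5 : ℝ → ℝ) (c1 c2 c3 c4 c5 c0 : ℝ)
    (h1 : IntegrableOn g1 I01 volume) (h2 : IntegrableOn g2 I01 volume)
    (h3 : IntegrableOn g3 I01 volume) (h4 : IntegrableOn g4 I01 volume)
    (h5 : IntegrableOn g5 I01 volume) :
    intI (fun u => c1 * g1 u + c2 * g2 u + c3 * g3 u + c4 * g4 u + c5 * g5 u + c0) =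
      c1 * intI g1 + c2 * intI g2 + c3 * intI g3 + c4 * intI g4 + c5 * intI g5 + c0 := by
  haveI := nu_prob
  have i1 : IntegrableOn (fun u => c1 * g1 u) I01 volume := h1.const_mul _
  have i2 : IntegrableOn (fun u => c2 * g2 u) I01 volume := h2.const_mul _
  have i3 : IntegrableOn (fun u => c3 * g3 u) I01 volume := h3.const_mul _
  have i4 : IntegrableOn (fun u => c4 * g4 u) I01 volume := h4.const_mul _
  have i5 : IntegrableOn (fun u => c5 * g5 u) I01 volume := h5.const_mul _
  have i12 : IntegrableOn (fun u => c1 * g1 u + c2 * g2 u) I01 volume := i1.add i2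
  have i123 : IntegrableOn (fun u => c1 * g1 u + c2 * g2 u + c3 * g3 u) I01 volume := i12.add i3
  have i1234 : IntegrableOn (fun u => c1 * g1 u + c2 * g2 u + c3 * g3 u + c4 * g4 u) I01 volume :=
    i123.add i4
  have i12345 : IntegrableOn
      (fun u => c1 * g1 u + c2 * g2 u + c3 * g3 u + c4 * g4 u + c5 * g5 u) I01 volume :=
    i1234.add i5
  unfold intI
  rw [integral_add i12345 (integrable_const c0), integral_add i1234 i5, integral_add i123 i4,
    integral_add i12 i3, integral_add i1 i2, integral_const_mul, integral_const_mul,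
    integral_const_mul, integral_const_mul, integral_const_mul, integral_const]
  simp

lemma gamma_mono (α : ℝ) (hα2 : α < 1) (c : ℝ) (hc : 0 ≤ c) :
    MonotoneOn (fun u => (Ioo α 1).indicator (fun _ => c) u) I01 := by
  intro u hu v hv huv
  by_cases h : u ∈ Ioo α 1
  · have hv' : v ∈ Ioo α 1 := ⟨lt_of_lt_of_le h.1 huv, hv.2⟩
    simp [h, hv']
  · simp only [Set.indicator_of_notMem h]
    exact Set.indicator_nonneg (fun _ _ => hc) v

lemma gamma_int (α c : ℝ) :
    IntegrableOn ((Ioo α 1).indicator (fun _ => c)) I01 volume := by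
  haveI := nu_prob
  exact (integrable_const c).indicator measurableSet_Ioo

lemma comb5_int (g1 g2 g3 g4 g5 : ℝ → ℝ) (c1 c2 c3 c4 c5 c0 : ℝ)
    (h1 : IntegrableOn g1 I01 volume) (h2 : IntegrableOn g2 I01 volume)
    (h3 : IntegrableOn g3 I01 volume) (h4 : IntegrableOn g4 I01 volume)
    (h5 : IntegrableOn g5 I01 volume) :
    IntegrableOn (fun u => c1 * g1 u + c2 * g2 u + c3 * g3 u + c4 * g4 u + c5 * g5 u + c0)
      I01 volume := by
  haveI := nu_prob
  exact (((((h1.const_mul _).add (h2.const_mul _)).add (h3.const_mul _)).add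
    (h4.const_mul _)).add (h5.const_mul _)).add (integrable_const c0)

def SqInt (f : ℝ → ℝ) : Prop :=
  IntegrableOn f (Ioo (0:ℝ) 1) volume ∧ IntegrableOn (fun u => f u ^ 2) (Ioo (0:ℝ) 1) volume

def IsQuantile (q : ℝ → ℝ) : Prop := MonotoneOn q (Ioo (0:ℝ) 1) ∧ SqInt q

def MemM (μ σ : ℝ) (q : ℝ → ℝ) : Prop :=
  IsQuantile q ∧ intI q = μ ∧ intI (fun u => q u ^ 2) = μ ^ 2 + σ ^ 2

def W2 (p q : ℝ → ℝ) : ℝ := intI (fun u => (p u - q u) ^ 2)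

def AeEqI (f g : ℝ → ℝ) : Prop := f =ᵐ[(volume : Measure ℝ).restrict (Ioo (0:ℝ) 1)] g

def Jpen (γ qF : ℝ → ℝ) (δ : ℝ) (q : ℝ → ℝ) : ℝ :=
  intI (fun u => γ u * q u) - δ * W2 qF q

set_option maxHeartbeats 4000000 in
theorem statement19
    (μ μF σ σF : ℝ) (hσpos : 0 < σ) (hσFpos : 0 < σF)
    (qF : ℝ → ℝ) (hqF : IsQuantile qF)
    (hqFm : intI qF = μF) (hqF2 : intI (fun u => qF u ^ 2) = μF ^ 2 + σF ^ 2)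
    (εmin : ℝ) (hεmin : εmin = (μF - μ) ^ 2 + (σF - σ) ^ 2)
    (α : ℝ) (hα1 : 0 < α) (hα2 : α < 1)
    (γα : ℝ → ℝ) (hγα : ∀ u : ℝ, γα u = (Ioo α 1).indicator (fun _ => 1 / (1 - α)) u)
    (σ0 : ℝ) (hσ0 : σ0 = Real.sqrt (α / (1 - α)))
    (ρ : ℝ) (hρ : ρ = (intI (fun u => γα u * qF u) - μF) / (σ0 * σF)) (hρ1 : ρ < 1)
    (εmax : ℝ) (hεmax : εmax = εmin + 2 * σ * σF * (1 - ρ))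
    (ε : ℝ) (hε1 : εmin < ε) (hε2 : ε < εmax)
    (δs : ℝ)
    (hδs : δs = -(ρ * Real.sqrt (α / (1 - α))) / (2 * σF) +
      (εmin + 2 * σ * σF - ε) * Real.sqrt (α * (1 - ρ ^ 2) / (1 - α)) /
        (2 * σF * Real.sqrt ((εmin + 4 * σ * σF - ε) * (ε - εmin)))) :
    intI γα = 1 ∧
    intI (fun u => γα u ^ 2) - 1 = α / (1 - α) ∧
    ∀ δ : ℝ, δs ≤ δ →
      IsLUB {y : ℝ | ∃ q : ℝ → ℝ, MemM μ σ q ∧ W2 qF q ≤ ε ∧ y = Jpen γα qF δ q}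
        (μ + σ * Real.sqrt (α / (1 - α) + 4 * δ ^ 2 * σF ^ 2 +
            4 * δ * σF * ρ * Real.sqrt (α / (1 - α))) -
          δ * (εmin + 2 * σ * σF)) := by
  subst hεmin
  subst hεmax
  have hα' : (0:ℝ) < 1 - α := by linarith only [hα2]
  have hγfun : γα = fun u => (Ioo α 1).indicator (fun _ => 1 / (1 - α)) u := funext hγα
  have hγsqfun : (fun u => γα u ^ 2) =
      fun u => (Ioo α 1).indicator (fun _ => (1 / (1 - α)) ^ 2) u := by
    funext u
    rw [hγα u]
    by_cases h : u ∈ Ioo α 1 <;> simp [h]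
  have I1 : intI γα = 1 := by
    rw [hγfun, intI_indicator α _ hα1.le hα2]
    field_simp
  have I2 : intI (fun u => γα u ^ 2) = 1 / (1 - α) := by
    rw [hγsqfun, intI_indicator α _ hα1.le hα2]
    field_simp
  refine ⟨I1, by rw [I2]; field_simp; ring, ?_⟩
  -- basic positivity and values
  have hσ0sq : σ0 ^ 2 = α / (1 - α) := by
    rw [hσ0]; exact Real.sq_sqrt (by positivity)
  have hσ0pos : 0 < σ0 := by
    rw [hσ0]; exact Real.sqrt_pos.mpr (by positivity)
  have I2' : intI (fun u => γα u ^ 2) = 1 + σ0 ^ 2 := by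
    rw [I2, hσ0sq]; field_simp; ring
  have hγmono : MonotoneOn γα I01 := by
    rw [hγfun]; exact gamma_mono α hα2 _ (by positivity)
  have hγint : IntegrableOn γα I01 volume := by rw [hγfun]; exact gamma_int α _
  have hγ2int : IntegrableOn (fun u => γα u ^ 2) I01 volume := by
    rw [hγsqfun]; exact gamma_int α _
  have hγmeas : AEStronglyMeasurable γα ((volume : Measure ℝ).restrict I01) :=
    hγint.aestronglyMeasurable
  have hγbd : ∃ C, ∀ x, ‖γα x‖ ≤ C := by
    refine ⟨1 / (1 - α), fun x => ?_⟩
    rw [hγα x]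
    by_cases h : x ∈ Ioo α 1
    · simp [h, abs_of_pos hα']
    · simp only [Set.indicator_of_notMem h, norm_zero]
      positivity
  obtain ⟨hqFmono, hqFL1, hqFL2⟩ := hqF
  have hγqFint : IntegrableOn (fun u => γα u * qF u) I01 volume :=
    hqFL1.bdd_mul hγmeas (ae_of_all _ hγbd.choose_spec)
  have X5 : intI (fun u => γα u * qF u) = μF + ρ * (σ0 * σF) := by
    have h1 : σ0 * σF ≠ 0 := by positivity
    have h2 := hρ
    rw [eq_div_iff h1] at h2
    linarith only [h2]
  have hρ0 : 0 ≤ ρ := by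
    have hch := chebyshev γα qF hγmono hqFmono hγint hqFL1 hγqFint
    rw [I1, hqFm, X5] at hch
    nlinarith only [hch, mul_pos hσ0pos hσFpos]
  -- K-facts; here K denotes (μF-μ)^2 + (σF-σ)^2 + 2σσF - ε
  have hKρ : 2 * σ * σF * ρ < (μF - μ) ^ 2 + (σF - σ) ^ 2 + 2 * σ * σF - ε := by
    nlinarith only [hε2]
  have hK0 : 0 < (μF - μ) ^ 2 + (σF - σ) ^ 2 + 2 * σ * σF - ε :=
    lt_of_le_of_lt (mul_nonneg (by positivity) hρ0) hKρ
  have hK2 : (μF - μ) ^ 2 + (σF - σ) ^ 2 + 2 * σ * σF - ε < 2 * σ * σF := by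
    linarith only [hε1]
  have hr1sq : Real.sqrt (1 - ρ ^ 2) ^ 2 = 1 - ρ ^ 2 :=
    Real.sq_sqrt (by nlinarith only [hρ0, hρ1])
  have hr1pos : 0 < Real.sqrt (1 - ρ ^ 2) :=
    Real.sqrt_pos.mpr (by nlinarith only [hρ0, hρ1])
  have hDpos : 0 < ((μF - μ) ^ 2 + (σF - σ) ^ 2 + 4 * σ * σF - ε) * (ε - ((μF - μ) ^ 2 + (σF - σ) ^ 2)) := by
    apply mul_pos
    · nlinarith only [hK0, mul_pos hσpos hσFpos]
    · linarith only [hε1]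
  have hsDsq : Real.sqrt (((μF - μ) ^ 2 + (σF - σ) ^ 2 + 4 * σ * σF - ε) *
      (ε - ((μF - μ) ^ 2 + (σF - σ) ^ 2))) ^ 2 =
      ((μF - μ) ^ 2 + (σF - σ) ^ 2 + 4 * σ * σF - ε) *
        (ε - ((μF - μ) ^ 2 + (σF - σ) ^ 2)) := Real.sq_sqrt hDpos.le
  have hsDpos : 0 < Real.sqrt (((μF - μ) ^ 2 + (σF - σ) ^ 2 + 4 * σ * σF - ε) *
      (ε - ((μF - μ) ^ 2 + (σF - σ) ^ 2))) := Real.sqrt_pos.mpr hDpos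
  set r1 := Real.sqrt (1 - ρ ^ 2) with hr1def
  set sD := Real.sqrt (((μF - μ) ^ 2 + (σF - σ) ^ 2 + 4 * σ * σF - ε) *
      (ε - ((μF - μ) ^ 2 + (σF - σ) ^ 2))) with hsDdef
  have hDval : ((μF - μ) ^ 2 + (σF - σ) ^ 2 + 4 * σ * σF - ε) *
      (ε - ((μF - μ) ^ 2 + (σF - σ) ^ 2)) =
      4 * σ ^ 2 * σF ^ 2 - ((μF - μ) ^ 2 + (σF - σ) ^ 2 + 2 * σ * σF - ε) ^ 2 := by ring
  have hsqrta : Real.sqrt (α * (1 - ρ ^ 2) / (1 - α)) = σ0 * r1 := by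
    rw [hσ0, hr1def, ← Real.sqrt_mul (by positivity : (0:ℝ) ≤ α / (1 - α))]
    congr 1
    field_simp
  have hδs' : δs * (2 * σF * sD) =
      σ0 * (((μF - μ) ^ 2 + (σF - σ) ^ 2 + 2 * σ * σF - ε) * r1 - ρ * sD) := by
    rw [hδs, hsqrta, ← hσ0]
    have h1 : ((μF - μ) ^ 2 + (σF - σ) ^ 2 + 4 * σ * σF - ε) *
        (ε - ((μF - μ) ^ 2 + (σF - σ) ^ 2)) =
        ((μF - μ) ^ 2 + (σF - σ) ^ 2 + 4 * σ * σF - ε) * (ε - ((μF - μ) ^ 2 + (σF - σ) ^ 2)) := rfl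
    field_simp
    ring
  have hKr1 : ρ * sD < ((μF - μ) ^ 2 + (σF - σ) ^ 2 + 2 * σ * σF - ε) * r1 := by
    have h1 : (((μF - μ) ^ 2 + (σF - σ) ^ 2 + 2 * σ * σF - ε) * r1) ^ 2 - (ρ * sD) ^ 2 =
        ((μF - μ) ^ 2 + (σF - σ) ^ 2 + 2 * σ * σF - ε) ^ 2 - 4 * σ ^ 2 * σF ^ 2 * ρ ^ 2 := by
      rw [mul_pow, mul_pow, hr1sq, hsDsq, hDval]; ring
    have h2 : 0 < ((μF - μ) ^ 2 + (σF - σ) ^ 2 + 2 * σ * σF - ε) ^ 2 -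
        4 * σ ^ 2 * σF ^ 2 * ρ ^ 2 := by
      nlinarith only [hKρ, hK0, mul_nonneg (mul_nonneg (mul_nonneg
        (by norm_num : (0:ℝ) ≤ 2) hσpos.le) hσFpos.le) hρ0]
    nlinarith only [h1, h2, mul_pos hK0 hr1pos, mul_nonneg hρ0 hsDpos.le]
  have hδspos : 0 < δs := by
    nlinarith only [hδs', mul_pos hσ0pos (sub_pos.mpr hKr1),
      mul_pos (mul_pos (by norm_num : (0:ℝ) < 2) hσFpos) hsDpos]
  -- main part
  intro δ hδ
  have hδpos : 0 < δ := lt_of_lt_of_le hδspos hδ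
  have htpos : 0 < σ0 ^ 2 + 4 * δ * ρ * σ0 * σF + 4 * δ ^ 2 * σF ^ 2 := by
    nlinarith only [hσ0pos, mul_nonneg (mul_nonneg (mul_nonneg hδpos.le hρ0) hσ0pos.le) hσFpos.le,
      mul_pos hδpos hδpos, mul_pos hσFpos hσFpos]
  set s := Real.sqrt (σ0 ^ 2 + 4 * δ * ρ * σ0 * σF + 4 * δ ^ 2 * σF ^ 2) with hsdef
  have hssq : s ^ 2 = σ0 ^ 2 + 4 * δ * ρ * σ0 * σF + 4 * δ ^ 2 * σF ^ 2 := Real.sq_sqrt htpos.le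
  have hspos : 0 < s := Real.sqrt_pos.mpr htpos
  have hsne : s ≠ 0 := ne_of_gt hspos
  have hVs : Real.sqrt (α / (1 - α) + 4 * δ ^ 2 * σF ^ 2 +
      4 * δ * σF * ρ * Real.sqrt (α / (1 - α))) = s := by
    rw [hsdef, ← hσ0]
    congr 1
    rw [← hσ0sq]
    ring
  -- the feasibility inequality
  have hAsD : σ0 * (((μF - μ) ^ 2 + (σF - σ) ^ 2 + 2 * σ * σF - ε) * r1) ≤
      (σ0 * ρ + 2 * δ * σF) * sD := by
    have h2 : δs * (2 * σF * sD) ≤ δ * (2 * σF * sD) :=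
      mul_le_mul_of_nonneg_right hδ
        (mul_nonneg (mul_nonneg (by norm_num) hσFpos.le) hsDpos.le)
    nlinarith only [hδs', h2]
  have hApos : 0 < σ0 * ρ + 2 * δ * σF := by
    nlinarith only [mul_nonneg hσ0pos.le hρ0, mul_pos hδpos hσFpos]
  have hKs : ((μF - μ) ^ 2 + (σF - σ) ^ 2 + 2 * σ * σF - ε) * s ≤
      2 * σ * σF * (σ0 * ρ + 2 * δ * σF) := by
    have q1 : (σ0 * (((μF - μ) ^ 2 + (σF - σ) ^ 2 + 2 * σ * σF - ε) * r1)) ^ 2 =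
        σ0 ^ 2 * ((μF - μ) ^ 2 + (σF - σ) ^ 2 + 2 * σ * σF - ε) ^ 2 * (1 - ρ ^ 2) := by
      rw [mul_pow, mul_pow, hr1sq]; ring
    have q2 : ((σ0 * ρ + 2 * δ * σF) * sD) ^ 2 = (σ0 * ρ + 2 * δ * σF) ^ 2 *
        (4 * σ ^ 2 * σF ^ 2 - ((μF - μ) ^ 2 + (σF - σ) ^ 2 + 2 * σ * σF - ε) ^ 2) := by
      rw [mul_pow, hsDsq, hDval]
    have hlnn : 0 ≤ σ0 * (((μF - μ) ^ 2 + (σF - σ) ^ 2 + 2 * σ * σF - ε) * r1) :=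
      mul_nonneg hσ0pos.le (mul_nonneg hK0.le (Real.sqrt_nonneg _))
    have e1 := pow_le_pow_left₀ hlnn hAsD 2
    rw [q1, q2] at e1
    have q3 : ((μF - μ) ^ 2 + (σF - σ) ^ 2 + 2 * σ * σF - ε) ^ 2 * s ^ 2 =
        ((μF - μ) ^ 2 + (σF - σ) ^ 2 + 2 * σ * σF - ε) ^ 2 * (σ0 * ρ + 2 * δ * σF) ^ 2 +
        σ0 ^ 2 * ((μF - μ) ^ 2 + (σF - σ) ^ 2 + 2 * σ * σF - ε) ^ 2 * (1 - ρ ^ 2) := by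
      rw [hssq]; ring
    have e2 : ((μF - μ) ^ 2 + (σF - σ) ^ 2 + 2 * σ * σF - ε) ^ 2 * s ^ 2 ≤
        4 * σ ^ 2 * σF ^ 2 * (σ0 * ρ + 2 * δ * σF) ^ 2 := by nlinarith only [e1, q3]
    have e4 : 0 < 2 * σ * σF * (σ0 * ρ + 2 * δ * σF) +
        ((μF - μ) ^ 2 + (σF - σ) ^ 2 + 2 * σ * σF - ε) * s := by
      nlinarith only [mul_pos (mul_pos (mul_pos (by norm_num : (0:ℝ) < 2) hσpos) hσFpos) hApos,
        mul_pos hK0 hspos]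
    nlinarith only [e2, e4]
  -- δ-level computations for the function f = γ + 2δ qF - (1+2δμF)
  have heqf2 : (fun u => (γα u + 2 * δ * qF u - (1 + 2 * δ * μF)) ^ 2) =
      (fun u => 1 * (fun v => γα v ^ 2) u + 4 * δ ^ 2 * (fun v => qF v ^ 2) u +
        4 * δ * (fun v => γα v * qF v) u + -(2 * (1 + 2 * δ * μF)) * γα u +
        -(4 * δ * (1 + 2 * δ * μF)) * qF u + (1 + 2 * δ * μF) ^ 2) := by
    funext u; beta_reduce; ring
  have if2 : IntegrableOn (fun u => (γα u + 2 * δ * qF u - (1 + 2 * δ * μF)) ^ 2) I01 volume := by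
    rw [heqf2]
    exact comb5_int _ _ _ _ _ _ _ _ _ _ _ hγ2int hqFL2 hγqFint hγint hqFL1
  have hfsq : intI (fun u => (γα u + 2 * δ * qF u - (1 + 2 * δ * μF)) ^ 2) =
      σ0 ^ 2 + 4 * δ * ρ * σ0 * σF + 4 * δ ^ 2 * σF ^ 2 := by
    rw [heqf2, intI_comb5 _ _ _ _ _ _ _ _ _ _ _ hγ2int hqFL2 hγqFint hγint hqFL1,
      I2', hqF2, X5, I1, hqFm]
    ring
  -- upper bound for all q in M(μ,σ)
  have hub : ∀ q : ℝ → ℝ, MemM μ σ q →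
      Jpen γα qF δ q ≤ μ + σ * s - δ * ((μF - μ) ^ 2 + (σF - σ) ^ 2 + 2 * σ * σF) := by
    rintro q ⟨⟨hqmono, hqL1, hqL2⟩, hqm, hq2⟩
    have hγq : IntegrableOn (fun u => γα u * q u) I01 volume := hqL1.bdd_mul hγmeas (ae_of_all _ hγbd.choose_spec)
    have hqFq : IntegrableOn (fun u => qF u * q u) I01 volume :=
      int_mul_of_sq qF q hqFL1 hqFL2 hqL1 hqL2
    have heqfh : (fun u => (γα u + 2 * δ * qF u - (1 + 2 * δ * μF)) * (q u - μ)) =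
        (fun u => 1 * (fun v => γα v * q v) u + 2 * δ * (fun v => qF v * q v) u +
          -(1 + 2 * δ * μF) * q u + -μ * γα u + -(2 * δ * μ) * qF u + (1 + 2 * δ * μF) * μ) := by
      funext u; beta_reduce; ring
    have ifh : IntegrableOn (fun u => (γα u + 2 * δ * qF u - (1 + 2 * δ * μF)) * (q u - μ))
        I01 volume := by
      rw [heqfh]
      exact comb5_int _ _ _ _ _ _ _ _ _ _ _ hγq hqFq hqL1 hγint hqFL1
    have hfh : intI (fun u => (γα u + 2 * δ * qF u - (1 + 2 * δ * μF)) * (q u - μ)) =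
        intI (fun u => γα u * q u) + 2 * δ * intI (fun u => qF u * q u) -
          (1 + 2 * δ * μF) * μ := by
      rw [heqfh, intI_comb5 _ _ _ _ _ _ _ _ _ _ _ hγq hqFq hqL1 hγint hqFL1, I1, hqFm, hqm]
      ring
    have heqh2 : (fun u => (q u - μ) ^ 2) = (fun u => 1 * (fun v => q v ^ 2) u +
        -(2 * μ) * q u + 0 * γα u + 0 * γα u + 0 * γα u + μ ^ 2) := by
      funext u; beta_reduce; ring
    have ih2 : IntegrableOn (fun u => (q u - μ) ^ 2) I01 volume := by
      rw [heqh2]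
      exact comb5_int _ _ _ _ _ _ _ _ _ _ _ hqL2 hqL1 hγint hγint hγint
    have hh2 : intI (fun u => (q u - μ) ^ 2) = σ ^ 2 := by
      rw [heqh2, intI_comb5 _ _ _ _ _ _ _ _ _ _ _ hqL2 hqL1 hγint hγint hγint, hq2, hqm]
      ring
    have hCS := cauchy_schwarz (fun u => γα u + 2 * δ * qF u - (1 + 2 * δ * μF))
      (fun u => q u - μ) if2 ih2 ifh s σ hspos hσpos
      (by beta_reduce; rw [hfsq]; exact hssq.symm) (by beta_reduce; exact hh2)
    beta_reduce at hCS
    have hW2eq : (fun u => (qF u - q u) ^ 2) = (fun u => 1 * (fun v => qF v ^ 2) u +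
        (-2) * (fun v => qF v * q v) u + 1 * (fun v => q v ^ 2) u + 0 * γα u + 0 * γα u + 0) := by
      funext u; beta_reduce; ring
    have hW2 : W2 qF q = μF ^ 2 + σF ^ 2 - 2 * intI (fun u => qF u * q u) + (μ ^ 2 + σ ^ 2) := by
      show intI (fun u => (qF u - q u) ^ 2) = _
      rw [hW2eq, intI_comb5 _ _ _ _ _ _ _ _ _ _ _ hqFL2 hqFq hqL2 hγint hγint, hqF2, hq2]
      ring
    show intI (fun u => γα u * q u) - δ * W2 qF q ≤ _
    rw [hW2]
    linarith only [hCS, hfh]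
  -- the maximizer
  set qs : ℝ → ℝ := fun u => μ + σ / s * (γα u + 2 * δ * qF u - (1 + 2 * δ * μF)) with hqsdef
  have hb2 : (σ / s) ^ 2 * (σ0 ^ 2 + 4 * δ * ρ * σ0 * σF + 4 * δ ^ 2 * σF ^ 2) = σ ^ 2 := by
    rw [← hssq]; field_simp
  have hb1 : σ / s * (σ0 ^ 2 + 4 * δ * ρ * σ0 * σF + 4 * δ ^ 2 * σF ^ 2) = σ * s := by
    rw [← hssq]; field_simp
  have heqqs : qs = (fun u => 0 * (fun v => γα v ^ 2) u + 0 * (fun v => qF v ^ 2) u +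
      0 * (fun v => γα v * qF v) u + (σ / s) * γα u + (2 * δ * (σ / s)) * qF u +
      (μ - σ / s * (1 + 2 * δ * μF))) := by
    rw [hqsdef]; funext u; beta_reduce; ring
  have iqs1 : IntegrableOn qs I01 volume := by
    rw [heqqs]; exact comb5_int _ _ _ _ _ _ _ _ _ _ _ hγ2int hqFL2 hγqFint hγint hqFL1
  have hqsm : intI qs = μ := by
    rw [heqqs, intI_comb5 _ _ _ _ _ _ _ _ _ _ _ hγ2int hqFL2 hγqFint hγint hqFL1, I1, hqFm]
    ring
  have heqqs2 : (fun u => qs u ^ 2) = (fun u => (σ / s) ^ 2 * (fun v => γα v ^ 2) u +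
      4 * δ ^ 2 * (σ / s) ^ 2 * (fun v => qF v ^ 2) u +
      4 * δ * (σ / s) ^ 2 * (fun v => γα v * qF v) u +
      2 * (σ / s) * (μ - σ / s * (1 + 2 * δ * μF)) * γα u +
      4 * δ * (σ / s) * (μ - σ / s * (1 + 2 * δ * μF)) * qF u +
      (μ - σ / s * (1 + 2 * δ * μF)) ^ 2) := by
    rw [hqsdef]; funext u; beta_reduce; ring
  have iqs2 : IntegrableOn (fun u => qs u ^ 2) I01 volume := by
    rw [heqqs2]; exact comb5_int _ _ _ _ _ _ _ _ _ _ _ hγ2int hqFL2 hγqFint hγint hqFL1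
  have hqs2 : intI (fun u => qs u ^ 2) = μ ^ 2 + σ ^ 2 := by
    rw [heqqs2, intI_comb5 _ _ _ _ _ _ _ _ _ _ _ hγ2int hqFL2 hγqFint hγint hqFL1,
      I2', hqF2, X5, I1, hqFm]
    linear_combination hb2
  have hqsmono : MonotoneOn qs I01 := by
    intro u hu v hv huv
    show μ + σ / s * (γα u + 2 * δ * qF u - (1 + 2 * δ * μF)) ≤
      μ + σ / s * (γα v + 2 * δ * qF v - (1 + 2 * δ * μF))
    have hin : γα u + 2 * δ * qF u - (1 + 2 * δ * μF) ≤
        γα v + 2 * δ * qF v - (1 + 2 * δ * μF) :=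
      sub_le_sub_right (add_le_add (hγmono hu hv huv)
        (mul_le_mul_of_nonneg_left (hqFmono hu hv huv) (by linarith only [hδpos]))) _
    exact add_le_add_right (mul_le_mul_of_nonneg_left hin
      (div_nonneg hσpos.le hspos.le)) μ
  have hqsM : MemM μ σ qs := ⟨⟨hqsmono, iqs1, iqs2⟩, hqsm, hqs2⟩
  have heqW2qs : (fun u => (qF u - qs u) ^ 2) = (fun u => (σ / s) ^ 2 * (fun v => γα v ^ 2) u +
      (1 - 2 * δ * (σ / s)) ^ 2 * (fun v => qF v ^ 2) u +
      (-(2 * (σ / s) * (1 - 2 * δ * (σ / s)))) * (fun v => γα v * qF v) u +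
      (-(2 * (σ / s) * (σ / s * (1 + 2 * δ * μF) - μ))) * γα u +
      (2 * (1 - 2 * δ * (σ / s)) * (σ / s * (1 + 2 * δ * μF) - μ)) * qF u +
      (σ / s * (1 + 2 * δ * μF) - μ) ^ 2) := by
    rw [hqsdef]; funext u; beta_reduce; ring
  have hW2qs : W2 qF qs = (μF - μ) ^ 2 + (σF - σ) ^ 2 + 2 * σ * σF -
      2 * (σ / s) * σF * (σ0 * ρ + 2 * δ * σF) := by
    show intI (fun u => (qF u - qs u) ^ 2) = _
    rw [heqW2qs, intI_comb5 _ _ _ _ _ _ _ _ _ _ _ hγ2int hqFL2 hγqFint hγint hqFL1,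
      I2', hqF2, X5, I1, hqFm]
    linear_combination hb2
  have hfeas : W2 qF qs ≤ ε := by
    rw [hW2qs]
    have h1 : ((μF - μ) ^ 2 + (σF - σ) ^ 2 + 2 * σ * σF - ε) ≤
        2 * σ * σF * (σ0 * ρ + 2 * δ * σF) / s := (le_div_iff₀ hspos).mpr hKs
    have h2 : 2 * (σ / s) * σF * (σ0 * ρ + 2 * δ * σF) =
        2 * σ * σF * (σ0 * ρ + 2 * δ * σF) / s := by
      field_simp
    linarith only [h1, h2]
  have heqγqs : (fun u => γα u * qs u) = (fun u => (σ / s) * (fun v => γα v ^ 2) u +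
      0 * (fun v => qF v ^ 2) u + (2 * δ * (σ / s)) * (fun v => γα v * qF v) u +
      (μ - σ / s * (1 + 2 * δ * μF)) * γα u + 0 * qF u + 0) := by
    rw [hqsdef]; funext u; beta_reduce; ring
  have hγqs : intI (fun u => γα u * qs u) = μ + (σ / s) * (σ0 ^ 2 + 2 * δ * ρ * σ0 * σF) := by
    rw [heqγqs, intI_comb5 _ _ _ _ _ _ _ _ _ _ _ hγ2int hqFL2 hγqFint hγint hqFL1,
      I2', hqF2, X5, I1, hqFm]
    ring
  have hval : Jpen γα qF δ qs = μ + σ * s -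
      δ * ((μF - μ) ^ 2 + (σF - σ) ^ 2 + 2 * σ * σF) := by
    show intI (fun u => γα u * qs u) - δ * W2 qF qs = _
    rw [hγqs, hW2qs]
    linear_combination hb1
  rw [hVs]
  constructor
  · rintro y ⟨q, hqM, -, rfl⟩
    exact hub q hqM
  · intro b hb
    exact hb ⟨qs, hqsM, hfeas, hval.symm⟩
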